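/- arXiv:cond-mat/0102181 — 3 statements merged into one kernel-verified Lean document; each statement's English description precedes it below -/
import Mathlib

section
/- With the boundary convention ΔH(0) := log₂|A|, set Δ²H(1) := H(1) - log₂|A|, Δ²H(L) := H(L) - 2H(L-1) + H(L-2) for L ≥ 2, and Δ³H(L) := Δ²H(L) - Δ²H(L-1) for L ≥ 2. If the series Σ_{L=2}^∞ (L-1)·Δ³H(L) converges, then the total predictability G := Σ_{L=1}^∞ Δ²H(L) satisfies G = -Σ_{L=2}^∞ (L-1)·Δ³H(L). -/
open MeasureTheory Real Filter

/-- The probability of the cylinder set of sequences beginning with the word `w`. -/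
noncomputable def cylP {A : Type*} [MeasurableSpace A] (μ : Measure (ℕ → A)) {L : ℕ}
    (w : Fin L → A) : ℝ :=
  (μ {x : ℕ → A | ∀ i : Fin L, x i.1 = w i}).toReal

/-- The block entropy `H(L)` in bits, with the convention `0 · log₂ 0 = 0`;
terms with `cylP μ w = 0` contribute `0` to the sum. -/
noncomputable def blockH {A : Type*} [MeasurableSpace A] [Fintype A]
    (μ : Measure (ℕ → A)) (L : ℕ) : ℝ :=
  -∑ w : Fin L → A, cylP μ w * Real.logb 2 (cylP μ w)

/-- The left shift on one-sided sequences. -/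
def shift {A : Type*} : (ℕ → A) → (ℕ → A) := fun x n => x (n + 1)

/-- The second difference `Δ²H(L)` of the block entropy, with the boundary
convention `ΔH(0) := log₂|A|`, so that `Δ²H(1) = H(1) - log₂|A|` and
`Δ²H(L) = H(L) - 2H(L-1) + H(L-2)` for `L ≥ 2`. -/
noncomputable def d2H {A : Type*} [MeasurableSpace A] [Fintype A]
    (μ : Measure (ℕ → A)) : ℕ → ℝ := fun L =>
  if L = 1 then blockH μ 1 - Real.logb 2 (Fintype.card A)
  else blockH μ L - 2 * blockH μ (L - 1) + blockH μ (L - 2)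

/-- The third difference `Δ³H(L) = Δ²H(L) - Δ²H(L-1)` for `L ≥ 2`. -/
noncomputable def d3H {A : Type*} [MeasurableSpace A] [Fintype A]
    (μ : Measure (ℕ → A)) : ℕ → ℝ := fun L => d2H μ L - d2H μ (L - 1)

/-!
Summation by parts gives `∑_{L<N} (L+1) Δ³H(L+2) = N Δ²H(N+1) - G_N`, and the partial sums
`G_N = ΔH(N) - log₂|A|` telescope. Stationarity makes `H` concave (strong subadditivity of Shannon
entropy), so `ΔH` decreases to a nonnegative limit and `G_N` converges. Hence `N Δ²H(N+1)`
converges as well, and its limit is `0`: if `∑ aₙ` converges, the Cesàro means of `n aₙ` tend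
to `0`.
-/

open Finset

theorem sum_range_natCast_mul_eq (a : ℕ → ℝ) (N : ℕ) :
    ∑ n ∈ range N, (n : ℝ) * a n
      = N * ∑ n ∈ range N, a n - ∑ j ∈ range N, ∑ n ∈ range (j + 1), a n := by
  induction N with
  | zero => simp
  | succ N ih =>
    rw [sum_range_succ, ih, sum_range_succ (fun j => ∑ n ∈ range (j + 1), a n), sum_range_succ a N]
    push_cast
    ring

theorem eq_zero_of_tendsto_natCast_mul_of_tendsto_sum {a : ℕ → ℝ} {G c : ℝ}
    (hG : Tendsto (fun N => ∑ n ∈ range N, a n) atTop (nhds G))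
    (hc : Tendsto (fun n : ℕ => n * a n) atTop (nhds c)) : c = 0 := by
  -- Summation by parts: the Cesàro means of `n * a n` tend to `c`, and also to `G - G`.
  have hmeans : ∀ N : ℕ, (N : ℝ)⁻¹ * ∑ n ∈ range N, (n : ℝ) * a n
      = ∑ n ∈ range N, a n - (N : ℝ)⁻¹ * ∑ j ∈ range N, ∑ n ∈ range (j + 1), a n := by
    intro N
    rcases N.eq_zero_or_pos with rfl | hN
    · simp
    · rw [sum_range_natCast_mul_eq, mul_sub, ← mul_assoc, inv_mul_cancel₀ (by positivity),
        one_mul]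
  have hshift : Tendsto (fun j => ∑ n ∈ range (j + 1), a n) atTop (nhds G) :=
    (tendsto_add_atTop_iff_nat 1).2 hG
  have hlim := hG.sub hshift.cesaro
  rw [sub_self] at hlim
  exact tendsto_nhds_unique hc.cesaro (hlim.congr fun N => (hmeans N).symm)

theorem sum_range_succ_mul_sub_eq (a : ℕ → ℝ) (N : ℕ) :
    ∑ n ∈ range N, ((n : ℝ) + 1) * (a (n + 1) - a n) = N * a N - ∑ n ∈ range N, a n := by
  induction N with
  | zero => simp
  | succ N ih =>
    rw [sum_range_succ, ih, sum_range_succ]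
    push_cast
    ring

theorem eq_neg_of_tendsto_sum_of_tendsto_sum_succ_mul_sub {a : ℕ → ℝ} {G S : ℝ}
    (hG : Tendsto (fun N => ∑ n ∈ range N, a n) atTop (nhds G))
    (hS : Tendsto (fun N => ∑ n ∈ range N, ((n : ℝ) + 1) * (a (n + 1) - a n)) atTop (nhds S)) :
    G = -S := by
  have hc : Tendsto (fun n : ℕ => n * a n) atTop (nhds (S + G)) :=
    (hS.add hG).congr fun N => by rw [sum_range_succ_mul_sub_eq]; ring
  linarith [eq_zero_of_tendsto_natCast_mul_of_tendsto_sum hG hc]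

theorem mul_log_le_mul_log_add_sub {p q : ℝ} (hp : 0 ≤ p) (hq : 0 ≤ q) (hpq : q = 0 → p = 0) :
    p * log q ≤ p * log p + (q - p) := by
  rcases hp.eq_or_lt with rfl | hp
  · simpa using hq
  have hq : 0 < q := hq.lt_of_ne fun h => hp.ne' (hpq h.symm)
  have := log_le_sub_one_of_pos (div_pos hq hp)
  rw [log_div hq.ne' hp.ne'] at this
  have := mul_le_mul_of_nonneg_left this hp.le
  rw [mul_sub_one, mul_div_cancel₀ _ hp.ne'] at this
  linarith [mul_sub p (log q) (log p)]

theorem mul_log_le_mul_log_of_le {p q : ℝ} (hp : 0 ≤ p) (hpq : p ≤ q) :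
    p * log p ≤ p * log q := by
  rcases hp.eq_or_lt with rfl | hp
  · simp
  exact mul_le_mul_of_nonneg_left (log_le_log hp hpq) hp.le

theorem sum_mul_log_le_mul_log_sum {ι : Type*} (s : Finset ι) {p : ι → ℝ}
    (hp : ∀ i ∈ s, 0 ≤ p i) : ∑ i ∈ s, p i * log (p i) ≤ (∑ i ∈ s, p i) * log (∑ i ∈ s, p i) := by
  rw [sum_mul]
  exact sum_le_sum fun i hi => mul_log_le_mul_log_of_le (hp i hi) (single_le_sum hp hi)

theorem mul_log_mul_div {p q r m : ℝ} (hp : 0 ≤ p) (hpq : p ≤ q) (hpr : p ≤ r) (hqm : q ≤ m) :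
    p * log (q * r / m) = p * log q + p * log r - p * log m := by
  rcases hp.eq_or_lt with rfl | hp
  · simp
  have hq := hp.trans_le hpq
  have hr := hp.trans_le hpr
  rw [log_div (by positivity) (hq.trans_le hqm).ne', log_mul hq.ne' hr.ne']
  ring

theorem sum_mul_log_marginal_add_le {α γ : Type*} [Fintype α] [Fintype γ]
    (P : α → γ → ℝ) (hP : ∀ a b, 0 ≤ P a b) :
    (∑ a, (∑ b, P a b) * log (∑ b, P a b)) + ∑ b, (∑ a, P a b) * log (∑ a, P a b)
      ≤ (∑ a, ∑ b, P a b * log (P a b)) + (∑ a, ∑ b, P a b) * log (∑ a, ∑ b, P a b) := by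
  set Q : α → ℝ := fun a => ∑ b, P a b
  set R : γ → ℝ := fun b => ∑ a, P a b
  set M : ℝ := ∑ a, ∑ b, P a b
  have hPQ : ∀ a b, P a b ≤ Q a := fun a b => single_le_sum (fun b _ => hP a b) (mem_univ b)
  have hPR : ∀ a b, P a b ≤ R b := fun a b => single_le_sum (fun a _ => hP a b) (mem_univ a)
  have hQM : ∀ a, Q a ≤ M := fun a => single_le_sum (fun a _ => sum_nonneg fun b _ => hP a b)
    (mem_univ a)
  -- Gibbs' inequality against the product of the marginals, `Q a * R b / M`.
  have hgibbs : ∀ a b, P a b * log (Q a) + P a b * log (R b) - P a b * log M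
      ≤ P a b * log (P a b) + (Q a * R b / M - P a b) := by
    intro a b
    have hQ := (hP a b).trans (hPQ a b)
    rw [← mul_log_mul_div (hP a b) (hPQ a b) (hPR a b) (hQM a)]
    refine mul_log_le_mul_log_add_sub (hP a b)
      (div_nonneg (mul_nonneg hQ ((hP a b).trans (hPR a b))) (hQ.trans (hQM a))) fun h => ?_
    refine le_antisymm ?_ (hP a b)
    rcases div_eq_zero_iff.1 h with h | h
    · rcases mul_eq_zero.1 h with h | h
      · exact h ▸ hPQ a b
      · exact h ▸ hPR a b
    · exact h ▸ (hPQ a b).trans (hQM a)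
  have hmass : ∑ a, ∑ b, Q a * R b / M = M := by
    have hR : ∑ b, R b = M := sum_comm
    simp_rw [mul_div_assoc, ← mul_sum, ← sum_mul, ← sum_div, hR]
    by_cases hM : M = 0 <;> simp [hM, M, Q]
  have hsum := sum_le_sum fun a (_ : a ∈ univ) => sum_le_sum fun b (_ : b ∈ univ) => hgibbs a b
  simp only [sum_sub_distrib, sum_add_distrib, hmass] at hsum
  have hQ : ∑ a, ∑ b, P a b * log (Q a) = ∑ a, Q a * log (Q a) := by simp_rw [← sum_mul]; rfl
  have hR : ∑ a, ∑ b, P a b * log (R b) = ∑ b, R b * log (R b) := by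
    rw [sum_comm]; simp_rw [← sum_mul]; rfl
  have hM : ∑ a, ∑ b, P a b * log M = M * log M := by simp_rw [← sum_mul]; rfl
  linarith

theorem sum_fun_fin_succ_cons {A M : Type*} [Fintype A] [AddCommMonoid M] {L : ℕ}
    (f : (Fin (L + 1) → A) → M) :
    ∑ w, f w = ∑ a, ∑ v : Fin L → A, f (Fin.cons a v) := by
  rw [← Fintype.sum_equiv (Fin.consEquiv fun _ => A) (fun p => f (Fin.cons p.1 p.2)) f
    fun _ => rfl, Fintype.sum_prod_type]

theorem sum_fun_fin_succ_snoc {A M : Type*} [Fintype A] [AddCommMonoid M] {L : ℕ}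
    (f : (Fin (L + 1) → A) → M) :
    ∑ w, f w = ∑ v : Fin L → A, ∑ b, f (Fin.snoc v b) := by
  rw [← Fintype.sum_equiv (Fin.snocEquiv fun _ => A) (fun p => f (Fin.snoc p.2 p.1)) f
    fun _ => rfl, Fintype.sum_prod_type, sum_comm]

theorem MeasureTheory.sum_measure_inter_preimage_singleton {Ω β : Type*} [MeasurableSpace Ω]
    [MeasurableSpace β] [MeasurableSingletonClass β] [Fintype β] (μ : Measure Ω) {f : Ω → β}
    (hf : Measurable f) (s : Set Ω) : ∑ b, μ (s ∩ f ⁻¹' {b}) = μ s := by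
  simp_rw [Set.inter_comm s, ← Measure.restrict_apply (hf (measurableSet_singleton _))]
  rw [sum_measure_preimage_singleton _ fun b _ => hf (measurableSet_singleton b)]
  simp

section Cylinder

variable {A : Type*}

def wordCylinder {L : ℕ} (w : Fin L → A) : Set (ℕ → A) := {x | ∀ i : Fin L, x i = w i}

theorem wordCylinder_snoc {L : ℕ} (w : Fin L → A) (a : A) :
    wordCylinder (Fin.snoc w a : Fin (L + 1) → A)
      = wordCylinder w ∩ (fun x : ℕ → A => x L) ⁻¹' {a} := by
  ext x
  simp only [wordCylinder, Set.mem_inter_iff, Set.mem_ofPred_eq, Set.mem_preimage,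
    Set.mem_singleton_iff, Fin.forall_fin_succ', Fin.snoc_castSucc, Fin.snoc_last,
    Fin.val_castSucc, Fin.val_last]

theorem wordCylinder_cons {L : ℕ} (a : A) (w : Fin L → A) :
    wordCylinder (Fin.cons a w : Fin (L + 1) → A)
      = shift ⁻¹' wordCylinder w ∩ (fun x : ℕ → A => x 0) ⁻¹' {a} := by
  ext x
  simp only [wordCylinder, Set.mem_inter_iff, Set.mem_ofPred_eq, Set.mem_preimage,
    Set.mem_singleton_iff, Fin.forall_fin_succ, Fin.cons_zero, Fin.cons_succ, Fin.val_zero,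
    Fin.val_succ, shift]
  tauto

variable [MeasurableSpace A]

theorem cylP_eq (μ : Measure (ℕ → A)) {L : ℕ} (w : Fin L → A) :
    cylP μ w = (μ (wordCylinder w)).toReal := rfl

theorem cylP_fin_zero (μ : Measure (ℕ → A)) [IsProbabilityMeasure μ] (w : Fin 0 → A) :
    cylP μ w = 1 := by
  simp [cylP_eq, wordCylinder]

variable [MeasurableSingletonClass A]

theorem measurableSet_wordCylinder {L : ℕ} (w : Fin L → A) :
    MeasurableSet (wordCylinder w) := by
  simp only [wordCylinder, Set.ofPred_forall]
  exact .iInter fun i => measurable_pi_apply _ (measurableSet_singleton _)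

variable [Fintype A] (μ : Measure (ℕ → A)) [IsFiniteMeasure μ]

theorem sum_cylP_snoc {L : ℕ} (w : Fin L → A) : ∑ a, cylP μ (Fin.snoc w a) = cylP μ w := by
  simp_rw [cylP_eq, wordCylinder_snoc]
  rw [← ENNReal.toReal_sum fun _ _ => measure_ne_top _ _,
    sum_measure_inter_preimage_singleton μ (measurable_pi_apply L)]

theorem sum_cylP_cons (hstat : MeasurePreserving shift μ μ) {L : ℕ} (w : Fin L → A) :
    ∑ a, cylP μ (Fin.cons a w) = cylP μ w := by
  simp_rw [cylP_eq, wordCylinder_cons]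
  rw [← ENNReal.toReal_sum fun _ _ => measure_ne_top _ _,
    sum_measure_inter_preimage_singleton μ (measurable_pi_apply 0),
    hstat.measure_preimage (measurableSet_wordCylinder w).nullMeasurableSet]

end Cylinder

section BlockEntropy

variable {A : Type*} [MeasurableSpace A] [Fintype A] (μ : Measure (ℕ → A))

noncomputable def blockNegEntropy (L : ℕ) : ℝ := ∑ w : Fin L → A, cylP μ w * log (cylP μ w)

theorem blockH_eq_neg_blockNegEntropy_div (L : ℕ) :
    blockH μ L = -blockNegEntropy μ L / log 2 := by
  simp only [blockH, blockNegEntropy, logb, neg_div, sum_div, mul_div_assoc]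

theorem blockH_zero [IsProbabilityMeasure μ] : blockH μ 0 = 0 := by
  simp [blockH, cylP_fin_zero]

/-- `ΔH(L) = H(L) - H(L - 1)`, with the boundary value `ΔH(0) = log₂ |A|`. -/
noncomputable def entropyIncrement : ℕ → ℝ
  | 0 => logb 2 (Fintype.card A)
  | L + 1 => blockH μ (L + 1) - blockH μ L

theorem d2H_succ [IsProbabilityMeasure μ] (L : ℕ) :
    d2H μ (L + 1) = entropyIncrement μ (L + 1) - entropyIncrement μ L := by
  rcases L with _ | L
  · simp [d2H, entropyIncrement, blockH_zero]
  · rw [d2H, if_neg (by omega)]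
    simp only [entropyIncrement, Nat.add_sub_cancel, Nat.reduceSubDiff]
    ring

theorem sum_range_d2H_succ [IsProbabilityMeasure μ] (N : ℕ) :
    ∑ L ∈ range N, d2H μ (L + 1) = entropyIncrement μ N - entropyIncrement μ 0 := by
  simp_rw [d2H_succ]
  exact sum_range_sub _ N

variable [MeasurableSingletonClass A] [IsFiniteMeasure μ]

theorem blockNegEntropy_succ_le (L : ℕ) : blockNegEntropy μ (L + 1) ≤ blockNegEntropy μ L := by
  rw [blockNegEntropy, sum_fun_fin_succ_snoc]
  refine sum_le_sum fun v _ => ?_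
  rw [← sum_cylP_snoc μ v]
  exact sum_mul_log_le_mul_log_sum _ fun _ _ => ENNReal.toReal_nonneg

theorem two_mul_blockNegEntropy_le (hstat : MeasurePreserving shift μ μ) (m : ℕ) :
    2 * blockNegEntropy μ (m + 1) ≤ blockNegEntropy μ (m + 2) + blockNegEntropy μ m := by
  set P : (Fin m → A) → A → A → ℝ := fun v a b => cylP μ (Fin.cons a (Fin.snoc v b))
  have hmarg_right : ∀ v a, ∑ b, P v a b = cylP μ (Fin.cons a v) := by
    intro v a
    simp_rw [P, Fin.cons_snoc_eq_snoc_cons]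
    exact sum_cylP_snoc μ _
  have hmarg_left : ∀ v b, ∑ a, P v a b = cylP μ (Fin.snoc v b) := fun v b =>
    sum_cylP_cons μ hstat _
  have hsub := sum_le_sum fun v (_ : v ∈ univ) =>
    sum_mul_log_marginal_add_le (P v) fun _ _ => ENNReal.toReal_nonneg
  simp only [hmarg_right, hmarg_left, sum_cylP_cons μ hstat, sum_add_distrib] at hsub
  have hcons : blockNegEntropy μ (m + 1)
      = ∑ v : Fin m → A, ∑ a, cylP μ (Fin.cons a v) * log (cylP μ (Fin.cons a v)) := by
    rw [blockNegEntropy, sum_fun_fin_succ_cons, sum_comm]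
  have hsnoc : blockNegEntropy μ (m + 1)
      = ∑ v : Fin m → A, ∑ b, cylP μ (Fin.snoc v b) * log (cylP μ (Fin.snoc v b)) := by
    rw [blockNegEntropy, sum_fun_fin_succ_snoc]
  have hcons_snoc : blockNegEntropy μ (m + 2) = ∑ v, ∑ a, ∑ b, P v a b * log (P v a b) := by
    rw [blockNegEntropy, sum_fun_fin_succ_cons, sum_comm]
    simp_rw [sum_fun_fin_succ_snoc (L := m)]
    exact sum_congr rfl fun _ _ => sum_comm
  rw [← hcons, ← hsnoc, ← hcons_snoc] at hsub
  change _ ≤ _ + blockNegEntropy μ m at hsub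
  linarith

theorem blockH_le_blockH_succ (L : ℕ) : blockH μ L ≤ blockH μ (L + 1) := by
  simp only [blockH_eq_neg_blockNegEntropy_div]
  gcongr
  exact blockNegEntropy_succ_le μ L

theorem blockH_add_two_sub_le (hstat : MeasurePreserving shift μ μ) (m : ℕ) :
    blockH μ (m + 2) - blockH μ (m + 1) ≤ blockH μ (m + 1) - blockH μ m := by
  simp only [blockH_eq_neg_blockNegEntropy_div, ← sub_div]
  refine div_le_div_of_nonneg_right ?_ (log_nonneg one_le_two)
  linarith [two_mul_blockNegEntropy_le μ hstat m]

theorem exists_tendsto_entropyIncrement (hstat : MeasurePreserving shift μ μ) :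
    ∃ h, Tendsto (entropyIncrement μ) atTop (nhds h) := by
  have hanti : Antitone fun L => entropyIncrement μ (L + 1) :=
    antitone_nat_of_succ_le fun L => blockH_add_two_sub_le μ hstat L
  have hbdd : BddBelow (Set.range fun L => entropyIncrement μ (L + 1)) :=
    ⟨0, Set.forall_mem_range.2 fun L => sub_nonneg.2 (blockH_le_blockH_succ μ L)⟩
  exact ⟨_, (tendsto_add_atTop_iff_nat 1).1 (tendsto_atTop_ciInf hanti hbdd)⟩

end BlockEntropy

theorem total_predictability_eq_weighted_third_difference_general
    {A : Type*} [MeasurableSpace A] [MeasurableSingletonClass A] [Fintype A]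
    (μ : Measure (ℕ → A)) [IsProbabilityMeasure μ]
    (hstat : MeasurePreserving (shift (A := A)) μ μ)
    (S : ℝ)
    (hS : Tendsto (fun N : ℕ => ∑ L ∈ Finset.range N, ((L : ℝ) + 1) * d3H μ (L + 2))
      atTop (nhds S)) :
    Tendsto (fun N : ℕ => ∑ L ∈ Finset.range N, d2H μ (L + 1)) atTop (nhds (-S)) := by
  obtain ⟨rate, hrate⟩ := exists_tendsto_entropyIncrement μ hstat
  have hG : Tendsto (fun N => ∑ L ∈ range N, d2H μ (L + 1)) atTop
      (nhds (rate - entropyIncrement μ 0)) :=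
    (hrate.sub_const _).congr fun N => (sum_range_d2H_succ μ N).symm
  rwa [← eq_neg_of_tendsto_sum_of_tendsto_sum_succ_mul_sub hG hS]

/-- If `Σ_{L=2}^∞ (L-1)·Δ³H(L)` converges (to `S`), then the total
predictability `G = Σ_{L=1}^∞ Δ²H(L)` converges and `G = -Σ_{L=2}^∞ (L-1)·Δ³H(L)`. -/
theorem total_predictability_eq_weighted_third_difference
    {A : Type*} [MeasurableSpace A] [MeasurableSingletonClass A] [Fintype A]
    (hA : 2 ≤ Fintype.card A)
    (μ : Measure (ℕ → A)) [IsProbabilityMeasure μ]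
    (hstat : MeasurePreserving (shift (A := A)) μ μ)
    (S : ℝ)
    (hS : Tendsto (fun N : ℕ => ∑ L ∈ Finset.range N, ((L : ℝ) + 1) * d3H μ (L + 2))
      atTop (nhds S)) :
    Tendsto (fun N : ℕ => ∑ L ∈ Finset.range N, d2H μ (L + 1)) atTop (nhds (-S)) :=
  total_predictability_eq_weighted_third_difference_general μ hstat S hS
end

section
/- Suppose the excess entropy E = Σ_{L=1}^∞ [h_μ(L) - h_μ] converges and the series Σ_{L=1}^∞ L·[h_μ(L) - h_μ] converges. Then the transient information T := Σ_{L=0}^∞ [E + h_μ·L - H(L)] converges and T = Σ_{L=1}^∞ L·[h_μ(L) - h_μ]. -/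
open MeasureTheory Real Filter

/-!
With `d L = H(L+1) - H(L) - h_μ` and `S N = ∑_{L<N} d L` we have `H(L) = h_μ L + S L`, hence
`∑_{L<N} (E + h_μ L - H(L)) = ∑_{L<N} (L+1) d L + N (E - S N)`.
The first term tends to `T`. For the second, Abel summation of `∑_{L≥N} d L` against the
decreasing weights `1 / (L+1)` bounds the tail `E - S N` by `1 / (N+1)` times the oscillation
of the convergent series `∑ (L+1) d L` beyond `N`, so `N (E - S N) → 0`.
-/

open Finset Topology

lemma blockH_zero_s12 {A : Type*} [MeasurableSpace A] [Fintype A]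
    (μ : Measure (ℕ → A)) [IsProbabilityMeasure μ] : blockH μ 0 = 0 := by
  have hcyl : ∀ w : Fin 0 → A, cylP μ w = 1 := fun w => by
    simp [cylP]
  simp [blockH, hcyl]

section AbelBound

variable (a : ℕ → ℝ) {N : ℕ} {C : ℝ}

lemma abs_sum_Ico_div_succ_sub_le (hC : ∀ j, N ≤ j → |∑ k ∈ Ico N j, a k| ≤ C)
    {M : ℕ} (hM : N ≤ M) :
    |∑ k ∈ Ico N M, a k / (k + 1) - (∑ k ∈ Ico N M, a k) / (M + 1)|
      ≤ C * (1 / (N + 1) - 1 / (M + 1)) := by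
  induction M, hM using Nat.le_induction with
  | base => simp
  | succ M hM ih =>
    set P := ∑ k ∈ Ico N M, a k / (k + 1)
    set Q := ∑ k ∈ Ico N (M + 1), a k
    have hQ : ∑ k ∈ Ico N M, a k = Q - a M := by
      simp only [Q, sum_Ico_succ_top hM]; ring
    have hweight : 0 ≤ 1 / ((M : ℝ) + 1) - 1 / ((M : ℝ) + 1 + 1) := by
      rw [sub_nonneg]; gcongr; linarith
    have hsplit : P + a M / (M + 1) - Q / ((M : ℝ) + 1 + 1)
        = (P - (Q - a M) / (M + 1)) + Q * (1 / (M + 1) - 1 / ((M : ℝ) + 1 + 1)) := by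
      field_simp; ring
    have hstep : |Q * (1 / (M + 1) - 1 / ((M : ℝ) + 1 + 1))|
        ≤ C * (1 / (M + 1) - 1 / ((M : ℝ) + 1 + 1)) := by
      rw [abs_mul, abs_of_nonneg hweight]
      exact mul_le_mul_of_nonneg_right (hC (M + 1) (by omega)) hweight
    rw [hQ] at ih
    rw [sum_Ico_succ_top hM, Nat.cast_succ, hsplit]
    calc _ ≤ _ := abs_add_le _ _
      _ ≤ _ := add_le_add ih hstep
      _ = _ := by ring

/-- **Abel's inequality** for the weights `1 / (k + 1)`. -/
lemma abs_sum_Ico_div_succ_le (hC : ∀ j, N ≤ j → |∑ k ∈ Ico N j, a k| ≤ C)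
    {M : ℕ} (hM : N ≤ M) :
    |∑ k ∈ Ico N M, a k / (k + 1)| ≤ C / (N + 1) := by
  have hlast : |(∑ k ∈ Ico N M, a k) / (M + 1)| ≤ C / (M + 1) := by
    rw [abs_div, abs_of_pos (by positivity : (0 : ℝ) < M + 1)]
    gcongr
    exact hC M hM
  calc |∑ k ∈ Ico N M, a k / (k + 1)|
      ≤ |∑ k ∈ Ico N M, a k / (k + 1) - (∑ k ∈ Ico N M, a k) / (M + 1)|
        + |(∑ k ∈ Ico N M, a k) / (M + 1)| :=
          sub_le_iff_le_add.mp (abs_sub_abs_le_abs_sub _ _)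
    _ ≤ C * (1 / (N + 1) - 1 / (M + 1)) + C / (M + 1) :=
        add_le_add (abs_sum_Ico_div_succ_sub_le a hC hM) hlast
    _ = C / (N + 1) := by ring

end AbelBound

theorem tendsto_mul_sub_sum_range_of_tendsto_sum_range_succ_mul {d : ℕ → ℝ} {E T : ℝ}
    (hE : Tendsto (fun N : ℕ => ∑ k ∈ range N, d k) atTop (𝓝 E))
    (hT : Tendsto (fun N : ℕ => ∑ k ∈ range N, ((k : ℝ) + 1) * d k) atTop (𝓝 T)) :
    Tendsto (fun N : ℕ => (N : ℝ) * (E - ∑ k ∈ range N, d k)) atTop (𝓝 0) := by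
  rw [Metric.tendsto_atTop]
  intro ε hε
  obtain ⟨N₀, hN₀⟩ := Metric.cauchySeq_iff.mp hT.cauchySeq (ε / 2) (half_pos hε)
  refine ⟨N₀, fun N hN => ?_⟩
  have hosc : ∀ j, N ≤ j → |∑ k ∈ Ico N j, ((k : ℝ) + 1) * d k| ≤ ε / 2 := fun j hj => by
    rw [sum_Ico_eq_sub _ hj, ← Real.dist_eq]
    exact (hN₀ j (hN.trans hj) N hN).le
  have hpartial : ∀ M, N ≤ M → |∑ k ∈ range M, d k - ∑ k ∈ range N, d k| ≤ ε / 2 / (N + 1) :=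
    fun M hM => by
      have h := abs_sum_Ico_div_succ_le _ hosc hM
      have hd : ∀ k : ℕ, ((k : ℝ) + 1) * d k / (k + 1) = d k := fun k => by
        field_simp
      simp only [hd] at h
      rwa [sum_Ico_eq_sub _ hM] at h
  have htail : |E - ∑ k ∈ range N, d k| ≤ ε / 2 / (N + 1) :=
    le_of_tendsto (hE.sub_const _).abs (eventually_atTop.2 ⟨N, hpartial⟩)
  rw [Real.dist_eq, sub_zero, abs_mul, Nat.abs_cast]
  calc (N : ℝ) * |E - ∑ k ∈ range N, d k| ≤ N * (ε / 2 / (N + 1)) := by gcongr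
    _ ≤ ε / 2 := by
      rw [mul_div_assoc', div_le_iff₀ (by positivity)]
      nlinarith
    _ < ε := half_lt_self hε

lemma sum_range_sub_sum_range_eq_sum_succ_mul_add (d : ℕ → ℝ) (E : ℝ) (N : ℕ) :
    ∑ L ∈ range N, (E - ∑ k ∈ range L, d k)
      = ∑ L ∈ range N, ((L : ℝ) + 1) * d L + N * (E - ∑ k ∈ range N, d k) := by
  induction N with
  | zero => simp
  | succ N ih =>
    rw [sum_range_succ, ih, sum_range_succ (fun L => ((L : ℝ) + 1) * d L), sum_range_succ d]
    push_cast
    ring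

theorem tendsto_sum_range_transient (H : ℕ → ℝ) (hH : H 0 = 0) (h E T : ℝ)
    (hE : Tendsto (fun N : ℕ => ∑ L ∈ range N, (H (L + 1) - H L - h)) atTop (𝓝 E))
    (hT : Tendsto (fun N : ℕ => ∑ L ∈ range N, ((L : ℝ) + 1) * (H (L + 1) - H L - h))
      atTop (𝓝 T)) :
    Tendsto (fun N : ℕ => ∑ L ∈ range N, (E + h * L - H L)) atTop (𝓝 T) := by
  set d := fun L : ℕ => H (L + 1) - H L - h
  have hH_eq : ∀ L : ℕ, H L = h * L + ∑ k ∈ range L, d k := fun L => by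
    simp only [d, sum_sub_distrib, sum_range_sub (fun k => H k), sum_const, card_range,
      nsmul_eq_mul, hH]
    ring
  have hsum : ∀ N : ℕ, ∑ L ∈ range N, (E + h * L - H L)
      = ∑ L ∈ range N, ((L : ℝ) + 1) * d L + N * (E - ∑ k ∈ range N, d k) := fun N => by
    rw [← sum_range_sub_sum_range_eq_sum_succ_mul_add]
    refine sum_congr rfl fun L _ => ?_
    rw [hH_eq L]
    ring
  simpa only [hsum, add_zero] using
    hT.add (tendsto_mul_sub_sum_range_of_tendsto_sum_range_succ_mul hE hT)

theorem transient_information_eq_weighted_redundancy_sum_general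
    {A : Type*} [MeasurableSpace A] [Fintype A]
    (μ : Measure (ℕ → A)) [IsProbabilityMeasure μ]
    (hμ : ℝ)
    (E : ℝ)
    (hE : Tendsto (fun N : ℕ => ∑ L ∈ Finset.range N, (blockH μ (L + 1) - blockH μ L - hμ))
      atTop (nhds E))
    (T : ℝ)
    (hT : Tendsto (fun N : ℕ => ∑ L ∈ Finset.range N,
        ((L : ℝ) + 1) * (blockH μ (L + 1) - blockH μ L - hμ)) atTop (nhds T)) :
    Tendsto (fun N : ℕ => ∑ L ∈ Finset.range N, (E + hμ * L - blockH μ L)) atTop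
      (nhds T) :=
  tendsto_sum_range_transient _ (blockH_zero_s12 μ) hμ E T hE hT

/-- If the excess entropy `E = Σ_{L=1}^∞ [h_μ(L) - h_μ]` converges and
the series `Σ_{L=1}^∞ L·[h_μ(L) - h_μ]` converges (to `T`), then the transient
information `Σ_{L=0}^∞ [E + h_μ·L - H(L)]` converges and equals `T`. -/
theorem transient_information_eq_weighted_redundancy_sum
    {A : Type*} [MeasurableSpace A] [MeasurableSingletonClass A] [Fintype A]
    (hA : 2 ≤ Fintype.card A)
    (μ : Measure (ℕ → A)) [IsProbabilityMeasure μ]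
    (hstat : MeasurePreserving (shift (A := A)) μ μ)
    (hμ : ℝ) (hrate : Tendsto (fun L : ℕ => blockH μ L / L) atTop (nhds hμ))
    (E : ℝ)
    (hE : Tendsto (fun N : ℕ => ∑ L ∈ Finset.range N, (blockH μ (L + 1) - blockH μ L - hμ))
      atTop (nhds E))
    (T : ℝ)
    (hT : Tendsto (fun N : ℕ => ∑ L ∈ Finset.range N,
        ((L : ℝ) + 1) * (blockH μ (L + 1) - blockH μ L - hμ)) atTop (nhds T)) :
    Tendsto (fun N : ℕ => ∑ L ∈ Finset.range N, (E + hμ * L - blockH μ L)) atTop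
      (nhds T) :=
  transient_information_eq_weighted_redundancy_sum_general μ hμ E hE T hT
end

section
/- Suppose μ is order-R Markovian for some R ≥ 1: for every L ≥ R, every word w ∈ A^L with μ[w] > 0, and every symbol a ∈ A, μ[wa]/μ[w] = μ[w̄a]/μ[w̄], where w̄ is the length-R suffix of w. Set E = H(R) - R·h_μ, define the transient information T = Σ_{L=0}^∞ [E + h_μ·L - H(L)] (all terms with L ≥ R vanish), define the average state-uncertainty after L observations as 𝓗(L) := H(max(L,R)) - H(L) (the conditional entropy of the first R symbols given the first L symbols, which is zero for L ≥ R), and define the synchronization information S := Σ_{L=0}^∞ 𝓗(L). Then S = T + (1/2)·R·(R+1)·h_μ. -/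
open MeasureTheory Real Filter

set_option linter.unusedSectionVars false
open scoped Classical

section aux
variable {A : Type*} [MeasurableSpace A] [MeasurableSingletonClass A] [Fintype A]

lemma cyl_meas {L : ℕ} (w : Fin L → A) :
    MeasurableSet {x : ℕ → A | ∀ i : Fin L, x i.1 = w i} := by
  have : {x : ℕ → A | ∀ i : Fin L, x i.1 = w i}
      = ⋂ i : Fin L, (fun x : ℕ → A => x i.1) ⁻¹' {w i} := by
    ext x; simp [Set.mem_iInter]
  rw [this]
  exact MeasurableSet.iInter fun i => (measurable_pi_apply i.1) (measurableSet_singleton _)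

lemma snoc_set_eq {L : ℕ} (w : Fin L → A) (a : A) :
    {x : ℕ → A | ∀ i : Fin (L+1), x i.1 = Fin.snoc (α := fun _ => A) w a i}
      = {x : ℕ → A | ∀ i : Fin L, x i.1 = w i} ∩ {x : ℕ → A | x L = a} := by
  ext x
  constructor
  · intro h
    refine ⟨fun i => ?_, ?_⟩
    · have := h i.castSucc
      simpa [Fin.snoc_castSucc] using this
    · have := h (Fin.last L)
      simpa [Fin.snoc_last] using this
  · rintro ⟨h1, h2⟩ i
    induction i using Fin.lastCases with
    | last => simpa [Fin.snoc_last] using h2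
    | cast j => simpa [Fin.snoc_castSucc] using h1 j

lemma cylP_nonneg (μ : Measure (ℕ → A)) {L : ℕ} (w : Fin L → A) : 0 ≤ cylP μ w :=
  ENNReal.toReal_nonneg

lemma cylP_snoc_sum (μ : Measure (ℕ → A)) [IsProbabilityMeasure μ] {L : ℕ} (w : Fin L → A) :
    cylP μ w = ∑ a : A, cylP μ (Fin.snoc w a) := by
  have hU : {x : ℕ → A | ∀ i : Fin L, x i.1 = w i}
      = ⋃ a : A, {x : ℕ → A | ∀ i : Fin (L+1), x i.1 = Fin.snoc (α := fun _ => A) w a i} := by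
    simp only [snoc_set_eq]
    ext x
    simp only [Set.mem_iUnion, Set.mem_inter_iff, Set.mem_setOf_eq]
    constructor
    · intro h; exact ⟨x L, h, rfl⟩
    · rintro ⟨a, h, _⟩; exact h
  have hdisj : Pairwise (Function.onFun Disjoint
      (fun a : A => {x : ℕ → A | ∀ i : Fin (L+1), x i.1 = Fin.snoc (α := fun _ => A) w a i})) := by
    intro a b hab
    simp only [Function.onFun, snoc_set_eq]
    refine Set.disjoint_left.2 ?_
    rintro x ⟨_, h1⟩ ⟨_, h2⟩
    exact hab (h1 ▸ h2 ▸ rfl)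
  have hm := measure_iUnion (μ := μ) hdisj (fun a => cyl_meas (Fin.snoc w a))
  unfold cylP
  rw [hU, hm, tsum_fintype, ENNReal.toReal_sum]
  intro a _
  exact measure_ne_top μ _


lemma shift_iterate (M : ℕ) (x : ℕ → A) (n : ℕ) : (shift^[M]) x n = x (n + M) := by
  induction M generalizing x n with
  | zero => rfl
  | succ m ih =>
    rw [Function.iterate_succ_apply, ih]
    rfl

lemma cyl_disjoint {L : ℕ} {v v' : Fin L → A} (h : v ≠ v') :
    Disjoint {x : ℕ → A | ∀ i : Fin L, x i.1 = v i} {x : ℕ → A | ∀ i : Fin L, x i.1 = v' i} := by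
  refine Set.disjoint_left.2 fun x h1 h2 => h ?_
  funext i
  rw [← h1 i, ← h2 i]

lemma window_measure (μ : Measure (ℕ → A)) (hstat : MeasurePreserving (shift (A := A)) μ μ)
    (M R : ℕ) (u : Fin R → A) :
    μ {x : ℕ → A | ∀ i : Fin R, x (M + i.1) = u i} = μ {x : ℕ → A | ∀ i : Fin R, x i.1 = u i} := by
  have hset : {x : ℕ → A | ∀ i : Fin R, x (M + i.1) = u i}
      = (shift^[M]) ⁻¹' {x : ℕ → A | ∀ i : Fin R, x i.1 = u i} := by
    ext x
    simp only [Set.mem_preimage, Set.mem_setOf_eq, shift_iterate]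
    constructor
    · intro h i; rw [add_comm]; exact h i
    · intro h i; rw [add_comm]; exact h i
  rw [hset, (hstat.iterate M).measure_preimage (cyl_meas u).nullMeasurableSet]

lemma fiber_sum (μ : Measure (ℕ → A)) [IsProbabilityMeasure μ]
    (hstat : MeasurePreserving (shift (A := A)) μ μ) (M R : ℕ) (u : Fin R → A) :
    ∑ v ∈ Finset.univ.filter
        (fun v : Fin (M+R) → A => (fun i : Fin R => v (Fin.natAdd M i)) = u), cylP μ v
      = cylP μ u := by
  have hU : {x : ℕ → A | ∀ i : Fin R, x (M + i.1) = u i}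
      = ⋃ v ∈ Finset.univ.filter
          (fun v : Fin (M+R) → A => (fun i : Fin R => v (Fin.natAdd M i)) = u),
          {x : ℕ → A | ∀ i : Fin (M+R), x i.1 = v i} := by
    ext x
    simp only [Set.mem_iUnion, Finset.mem_filter, Finset.mem_univ, true_and, Set.mem_setOf_eq]
    constructor
    · intro h
      exact ⟨fun j : Fin (M+R) => x j.1, funext fun i => h i, fun i => rfl⟩
    · rintro ⟨v, hv, hxv⟩ i
      rw [← congrFun hv i]
      exact hxv (Fin.natAdd M i)
  have hd : ((Finset.univ.filter
      (fun v : Fin (M+R) → A => (fun i : Fin R => v (Fin.natAdd M i)) = u)) : Set (Fin (M+R) → A)).PairwiseDisjoint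
      (fun v => {x : ℕ → A | ∀ i : Fin (M+R), x i.1 = v i}) := by
    intro v _ v' _ hvv'
    exact cyl_disjoint hvv'
  have hm := measure_biUnion_finset (μ := μ) hd (fun v _ => cyl_meas v)
  rw [← hU, window_measure μ hstat] at hm
  unfold cylP
  rw [← ENNReal.toReal_sum (fun v _ => measure_ne_top μ _), ← hm]

lemma cylP_le_suffix (μ : Measure (ℕ → A)) [IsProbabilityMeasure μ]
    (hstat : MeasurePreserving (shift (A := A)) μ μ) {M R : ℕ} (v : Fin (M+R) → A) :
    cylP μ v ≤ cylP μ (fun i : Fin R => v (Fin.natAdd M i)) := by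
  unfold cylP
  rw [← window_measure μ hstat M R]
  refine ENNReal.toReal_mono (measure_ne_top μ _) (measure_mono fun x hx i => ?_)
  exact hx (Fin.natAdd M i)


lemma cylP_snoc_eq_zero (μ : Measure (ℕ → A)) [IsProbabilityMeasure μ] {L : ℕ}
    {v : Fin L → A} (hv : cylP μ v = 0) (a : A) : cylP μ (Fin.snoc v a) = 0 := by
  have hsum : ∑ b : A, cylP μ (Fin.snoc v b) = 0 := by rw [← cylP_snoc_sum μ v, hv]
  exact (Finset.sum_eq_zero_iff_of_nonneg (fun b _ => cylP_nonneg μ _)).1 hsum a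
    (Finset.mem_univ a)

lemma snoc_entropy_term (μ : Measure (ℕ → A)) [IsProbabilityMeasure μ]
    (hstat : MeasurePreserving (shift (A := A)) μ μ) {R : ℕ}
    (hMarkov : ∀ (M : ℕ) (w : Fin (M + R) → A), 0 < cylP μ w → ∀ a : A,
      cylP μ (Fin.snoc w a) / cylP μ w =
      cylP μ (Fin.snoc (fun i : Fin R => w (Fin.natAdd M i)) a) /
        cylP μ (fun i : Fin R => w (Fin.natAdd M i)))
    (M : ℕ) (v : Fin (M + R) → A) :
    ∑ a : A, cylP μ (Fin.snoc v a) * Real.logb 2 (cylP μ (Fin.snoc v a))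
      = cylP μ v * Real.logb 2 (cylP μ v)
        + cylP μ v * ∑ a : A,
            (cylP μ (Fin.snoc (fun i : Fin R => v (Fin.natAdd M i)) a)
              / cylP μ (fun i : Fin R => v (Fin.natAdd M i))) *
            Real.logb 2 (cylP μ (Fin.snoc (fun i : Fin R => v (Fin.natAdd M i)) a)
              / cylP μ (fun i : Fin R => v (Fin.natAdd M i))) := by
  set u : Fin R → A := fun i : Fin R => v (Fin.natAdd M i) with hu
  by_cases hv : cylP μ v = 0
  · have hz := cylP_snoc_eq_zero μ hv
    simp [hz, hv]
  · have hv' : 0 < cylP μ v := lt_of_le_of_ne (cylP_nonneg μ v) (Ne.symm hv)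
    have hu' : 0 < cylP μ u := lt_of_lt_of_le hv' (cylP_le_suffix μ hstat v)
    set q : A → ℝ := fun a => cylP μ (Fin.snoc u a) / cylP μ u with hq
    have key : ∀ a : A, cylP μ (Fin.snoc v a) = cylP μ v * q a := by
      intro a
      have h1 := hMarkov M v hv' a
      rw [← hu] at h1
      simp only [hq]
      rw [← h1, mul_div_cancel₀ _ hv'.ne']
    have hsum1 : ∑ a : A, q a = 1 := by
      simp only [hq]
      rw [← Finset.sum_div, ← cylP_snoc_sum μ u, div_self hu'.ne']
    calc ∑ a : A, cylP μ (Fin.snoc v a) * Real.logb 2 (cylP μ (Fin.snoc v a))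
        = ∑ a : A, ((cylP μ v * Real.logb 2 (cylP μ v)) * q a
            + cylP μ v * (q a * Real.logb 2 (q a))) := by
          refine Finset.sum_congr rfl fun a _ => ?_
          rw [key a]
          by_cases hqa : q a = 0
          · simp [hqa]
          · rw [Real.logb_mul hv'.ne' hqa]; ring
      _ = cylP μ v * Real.logb 2 (cylP μ v)
            + cylP μ v * ∑ a : A, q a * Real.logb 2 (q a) := by
          rw [Finset.sum_add_distrib, ← Finset.mul_sum, ← Finset.mul_sum, hsum1, mul_one]

lemma blockH_step (μ : Measure (ℕ → A)) [IsProbabilityMeasure μ]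
    (hstat : MeasurePreserving (shift (A := A)) μ μ) {R : ℕ}
    (hMarkov : ∀ (M : ℕ) (w : Fin (M + R) → A), 0 < cylP μ w → ∀ a : A,
      cylP μ (Fin.snoc w a) / cylP μ w =
      cylP μ (Fin.snoc (fun i : Fin R => w (Fin.natAdd M i)) a) /
        cylP μ (fun i : Fin R => w (Fin.natAdd M i)))
    (M : ℕ) :
    blockH μ (M + R + 1) = blockH μ (M + R)
      - ∑ u : Fin R → A, cylP μ u * ∑ a : A,
          (cylP μ (Fin.snoc u a) / cylP μ u) *
            Real.logb 2 (cylP μ (Fin.snoc u a) / cylP μ u) := by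
  have hreindex : ∑ w : Fin (M + R + 1) → A, cylP μ w * Real.logb 2 (cylP μ w)
      = ∑ p : A × (Fin (M + R) → A),
          cylP μ (Fin.snoc p.2 p.1) * Real.logb 2 (cylP μ (Fin.snoc p.2 p.1)) := by
    refine (Fintype.sum_equiv (Fin.snocEquiv (fun _ => A)) _ _ fun p => ?_).symm
    rfl
  unfold blockH
  rw [hreindex, Fintype.sum_prod_type_right]
  have hterm : ∀ v : Fin (M + R) → A,
      ∑ a : A, cylP μ (Fin.snoc v a) * Real.logb 2 (cylP μ (Fin.snoc v a))
        = cylP μ v * Real.logb 2 (cylP μ v)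
          + cylP μ v * ∑ a : A,
              (cylP μ (Fin.snoc (fun i : Fin R => v (Fin.natAdd M i)) a)
                / cylP μ (fun i : Fin R => v (Fin.natAdd M i))) *
              Real.logb 2 (cylP μ (Fin.snoc (fun i : Fin R => v (Fin.natAdd M i)) a)
                / cylP μ (fun i : Fin R => v (Fin.natAdd M i))) :=
    snoc_entropy_term μ hstat hMarkov M
  rw [Finset.sum_congr rfl fun v _ => hterm v, Finset.sum_add_distrib]
  have hfib : ∑ v : Fin (M + R) → A,
      cylP μ v * ∑ a : A,
          (cylP μ (Fin.snoc (fun i : Fin R => v (Fin.natAdd M i)) a)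
            / cylP μ (fun i : Fin R => v (Fin.natAdd M i))) *
          Real.logb 2 (cylP μ (Fin.snoc (fun i : Fin R => v (Fin.natAdd M i)) a)
            / cylP μ (fun i : Fin R => v (Fin.natAdd M i)))
      = ∑ u : Fin R → A, cylP μ u * ∑ a : A,
          (cylP μ (Fin.snoc u a) / cylP μ u) *
            Real.logb 2 (cylP μ (Fin.snoc u a) / cylP μ u) := by
    rw [← Finset.sum_fiberwise Finset.univ
      (fun v : Fin (M + R) → A => (fun i : Fin R => v (Fin.natAdd M i)))
      (fun v : Fin (M + R) → A => cylP μ v * ∑ a : A,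
          (cylP μ (Fin.snoc (fun i : Fin R => v (Fin.natAdd M i)) a)
            / cylP μ (fun i : Fin R => v (Fin.natAdd M i))) *
          Real.logb 2 (cylP μ (Fin.snoc (fun i : Fin R => v (Fin.natAdd M i)) a)
            / cylP μ (fun i : Fin R => v (Fin.natAdd M i))))]
    refine Finset.sum_congr rfl fun u _ => ?_
    calc ∑ v ∈ Finset.univ.filter
          (fun v : Fin (M + R) → A => (fun i : Fin R => v (Fin.natAdd M i)) = u),
          (cylP μ v * ∑ a : A,
            (cylP μ (Fin.snoc (fun i : Fin R => v (Fin.natAdd M i)) a)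
              / cylP μ (fun i : Fin R => v (Fin.natAdd M i))) *
            Real.logb 2 (cylP μ (Fin.snoc (fun i : Fin R => v (Fin.natAdd M i)) a)
              / cylP μ (fun i : Fin R => v (Fin.natAdd M i))))
        = ∑ v ∈ Finset.univ.filter
          (fun v : Fin (M + R) → A => (fun i : Fin R => v (Fin.natAdd M i)) = u),
          (cylP μ v * ∑ a : A,
            (cylP μ (Fin.snoc u a) / cylP μ u) *
              Real.logb 2 (cylP μ (Fin.snoc u a) / cylP μ u)) := by
          refine Finset.sum_congr rfl fun v hv => ?_
          rw [(Finset.mem_filter.1 hv).2]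
      _ = (∑ v ∈ Finset.univ.filter
          (fun v : Fin (M + R) → A => (fun i : Fin R => v (Fin.natAdd M i)) = u),
          cylP μ v) * ∑ a : A,
            (cylP μ (Fin.snoc u a) / cylP μ u) *
              Real.logb 2 (cylP μ (Fin.snoc u a) / cylP μ u) := by
          rw [Finset.sum_mul]
      _ = cylP μ u * ∑ a : A,
            (cylP μ (Fin.snoc u a) / cylP μ u) *
              Real.logb 2 (cylP μ (Fin.snoc u a) / cylP μ u) := by
          rw [fiber_sum μ hstat M R u]
  rw [hfib]
  ring

theorem final_calc
    (μ : Measure (ℕ → A)) [IsProbabilityMeasure μ]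
    (hμ : ℝ) (hrate : Tendsto (fun L : ℕ => blockH μ L / L) atTop (nhds hμ))
    (R : ℕ) (hR : 1 ≤ R) (c : ℝ)
    (hstep : ∀ M : ℕ, blockH μ (M + R + 1) = blockH μ (M + R) + c) :
    (∑' L : ℕ, (blockH μ (max L R) - blockH μ L)) =
      (∑' L : ℕ, ((blockH μ R - R * hμ) + hμ * L - blockH μ L)) +
        1 / 2 * R * (R + 1) * hμ := by
  have hlin : ∀ M : ℕ, blockH μ (M + R) = blockH μ R + M * c := by
    intro M
    induction M with
    | zero => simp
    | succ m ih =>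
      have : m + 1 + R = m + R + 1 := by omega
      rw [this, hstep m, ih]
      push_cast
      ring
  have hlin' : ∀ L : ℕ, R ≤ L → blockH μ L = blockH μ R + ((L : ℝ) - R) * c := by
    intro L hL
    have h1 : L - R + R = L := Nat.sub_add_cancel hL
    have := hlin (L - R)
    rw [h1] at this
    rw [this]
    have : ((L - R : ℕ) : ℝ) = (L : ℝ) - R := by
      push_cast [Nat.cast_sub hL]; ring
    rw [this]
  -- identify c = hμ
  have hc : c = hμ := by
    have htend : Tendsto (fun L : ℕ => blockH μ L / L) atTop (nhds c) := by
      have he : ∀ᶠ L : ℕ in atTop, (blockH μ R - R * c) / L + c = blockH μ L / L := by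
        filter_upwards [eventually_ge_atTop R, eventually_ge_atTop 1] with L hL h1
        have hL0 : (L : ℝ) ≠ 0 := by positivity
        rw [hlin' L hL]
        field_simp
        ring
      have h0 : Tendsto (fun L : ℕ => (blockH μ R - R * c) / L + c) atTop (nhds (0 + c)) := by
        exact (tendsto_const_div_atTop_nhds_zero_nat _).add tendsto_const_nhds
      rw [zero_add] at h0
      exact h0.congr' he
    exact tendsto_nhds_unique htend hrate
  subst hc
  -- the two series have support in range R
  have hS0 : ∀ L ∉ Finset.range R, blockH μ (max L R) - blockH μ L = 0 := by
    intro L hL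
    have hRL : R ≤ L := by simpa using hL
    rw [max_eq_left hRL, sub_self]
  have hT0 : ∀ L ∉ Finset.range R,
      (blockH μ R - R * c) + c * L - blockH μ L = 0 := by
    intro L hL
    have hRL : R ≤ L := by simpa using hL
    rw [hlin' L hRL]
    ring
  rw [tsum_eq_sum hS0, tsum_eq_sum hT0]
  have hcong : ∀ L ∈ Finset.range R,
      blockH μ (max L R) - blockH μ L
        = ((blockH μ R - R * c) + c * L - blockH μ L) + (R * c - c * L) := by
    intro L hL
    have : L ≤ R := le_of_lt (Finset.mem_range.1 hL)
    rw [max_eq_right this]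
    ring
  rw [Finset.sum_congr rfl hcong, Finset.sum_add_distrib]
  have hgauss : (∑ L ∈ Finset.range R, (L : ℝ)) = R * (R - 1) / 2 := by
    have h2 := congrArg (Nat.cast : ℕ → ℝ) (Finset.sum_range_id_mul_two R)
    push_cast [Nat.cast_sub hR] at h2
    linarith
  have : ∑ L ∈ Finset.range R, ((R : ℝ) * c - c * L)
      = 1 / 2 * R * (R + 1) * c := by
    rw [Finset.sum_sub_distrib, Finset.sum_const, ← Finset.mul_sum, hgauss]
    simp only [Finset.card_range, nsmul_eq_mul]
    ring
  rw [this]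

end aux

/-- For an order-`R` Markovian process, with excess entropy
`E = H(R) - R·h_μ`, transient information `T = Σ_{L=0}^∞ [E + h_μ·L - H(L)]`
(all terms with `L ≥ R` vanish), average state-uncertainty
`𝓗(L) = H(max(L,R)) - H(L)`, and synchronization information `S = Σ_{L=0}^∞ 𝓗(L)`,
one has `S = T + (1/2)·R·(R+1)·h_μ`. -/
theorem synchronization_information_theorem
    {A : Type*} [MeasurableSpace A] [MeasurableSingletonClass A] [Fintype A]
    (hA : 2 ≤ Fintype.card A)
    (μ : Measure (ℕ → A)) [IsProbabilityMeasure μ]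
    (hstat : MeasurePreserving (shift (A := A)) μ μ)
    (hμ : ℝ) (hrate : Tendsto (fun L : ℕ => blockH μ L / L) atTop (nhds hμ))
    (R : ℕ) (hR : 1 ≤ R)
    (hMarkov : ∀ (M : ℕ) (w : Fin (M + R) → A), 0 < cylP μ w → ∀ a : A,
      cylP μ (Fin.snoc w a) / cylP μ w =
      cylP μ (Fin.snoc (fun i : Fin R => w (Fin.natAdd M i)) a) /
        cylP μ (fun i : Fin R => w (Fin.natAdd M i))) :
    (∑' L : ℕ, (blockH μ (max L R) - blockH μ L)) =
      (∑' L : ℕ, ((blockH μ R - R * hμ) + hμ * L - blockH μ L)) +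
        1 / 2 * R * (R + 1) * hμ := by
  refine final_calc μ hμ hrate R hR
    (-∑ u : Fin R → A, cylP μ u * ∑ a : A,
        (cylP μ (Fin.snoc u a) / cylP μ u) *
          Real.logb 2 (cylP μ (Fin.snoc u a) / cylP μ u)) (fun M => ?_)
  rw [blockH_step μ hstat hMarkov M]
  ring
end
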